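/- Let A be a finite-dimensional commutative unital ℂ-algebra equipped with a Frobenius pairing ⟨·,·⟩, let G ⊆ A be a subset which generates A as a unital ℂ-algebra, and let s : G → ℂ be a function. Suppose there exists α ∈ A with g·α = s(g)·α for all g ∈ G and ⟨α,α⟩ ≠ 0. Then the simultaneous generalized eigenspace H = {v ∈ A : for every g ∈ G there exists n ∈ ℕ with (g − s(g)·1)ⁿ·v = 0} is exactly one-dimensional, spanned by α. -/
import Mathlib


lemma aux_pow_add_mul {A : Type*} [CommRing A] (x y v : A) (n m : ℕ)
    (hx : x ^ n * v = 0) (hy : y ^ m * v = 0) : (x + y) ^ (n + m) * v = 0 := by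
  rw [add_pow, Finset.sum_mul]
  apply Finset.sum_eq_zero
  intro i hi
  simp only [Finset.mem_range] at hi
  by_cases h : n ≤ i
  · obtain ⟨k, rfl⟩ := Nat.exists_eq_add_of_le h
    rw [pow_add]
    linear_combination (x ^ k * y ^ (n + m - (n + k)) * ((n + m).choose (n + k) : A)) * hx
  · have h2 : n + m - i = m + (n - i) := by omega
    rw [h2, pow_add]
    linear_combination (x ^ i * y ^ (n - i) * ((n + m).choose i : A)) * hy

lemma aux_char {A : Type*} [CommRing A] [Algebra ℂ A]
    (Bform : A →ₗ[ℂ] A →ₗ[ℂ] ℂ)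
    (hfrob : ∀ a b c : A, Bform (a * b) c = Bform a (b * c))
    (G : Set A) (s : A → ℂ) (α : A) (hα : ∀ g ∈ G, g * α = s g • α)
    (b : A) (hb : b ∈ Algebra.adjoin ℂ G) :
    ∃ μ : ℂ, (∀ x : A, Bform α (b * x) = μ * Bform α x) ∧
      ∀ v : A, (∀ g ∈ G, ∃ n : ℕ, (g - s g • 1) ^ n * v = 0) →
        ∃ n : ℕ, (b - μ • 1) ^ n * v = 0 := by
  induction hb using Algebra.adjoin_induction with
  | mem g hg =>
    refine ⟨s g, fun x => ?_, fun v hv => hv g hg⟩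
    rw [← hfrob, mul_comm α g, hα g hg, map_smul]
    simp [smul_eq_mul]
  | algebraMap r =>
    refine ⟨r, fun x => ?_, fun v _ => ⟨1, ?_⟩⟩
    · rw [Algebra.algebraMap_eq_smul_one, smul_mul_assoc, one_mul, map_smul, smul_eq_mul]
    · rw [Algebra.algebraMap_eq_smul_one, sub_self, pow_one, zero_mul]
  | add b₁ b₂ hb₁ hb₂ ih₁ ih₂ =>
    obtain ⟨μ₁, hc₁, hn₁⟩ := ih₁
    obtain ⟨μ₂, hc₂, hn₂⟩ := ih₂
    refine ⟨μ₁ + μ₂, fun x => ?_, fun v hv => ?_⟩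
    · rw [add_mul, map_add, hc₁, hc₂, add_mul]
    · obtain ⟨n, hn⟩ := hn₁ v hv
      obtain ⟨m, hm⟩ := hn₂ v hv
      refine ⟨n + m, ?_⟩
      have : b₁ + b₂ - (μ₁ + μ₂) • 1 = (b₁ - μ₁ • 1) + (b₂ - μ₂ • 1) := by
        rw [add_smul]; ring
      rw [this]
      exact aux_pow_add_mul _ _ _ n m hn hm
  | mul b₁ b₂ hb₁ hb₂ ih₁ ih₂ =>
    obtain ⟨μ₁, hc₁, hn₁⟩ := ih₁
    obtain ⟨μ₂, hc₂, hn₂⟩ := ih₂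
    refine ⟨μ₁ * μ₂, fun x => ?_, fun v hv => ?_⟩
    · rw [mul_assoc, hc₁, hc₂, mul_assoc]
    · obtain ⟨n, hn⟩ := hn₁ v hv
      obtain ⟨m, hm⟩ := hn₂ v hv
      have key : b₁ * b₂ - (μ₁ * μ₂) • 1 =
          b₁ * (b₂ - μ₂ • 1) + μ₂ • (b₁ - μ₁ • 1) := by
        simp only [Algebra.smul_def, map_mul, mul_one]
        ring
      refine ⟨m + n, ?_⟩
      rw [key]
      refine aux_pow_add_mul _ _ _ m n ?_ ?_
      · rw [mul_pow, mul_assoc, hm, mul_zero]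
      · rw [smul_pow, smul_mul_assoc, hn, smul_zero]


/-- The simultaneous generalized eigenspace
`{v ∈ A : ∀ g ∈ G, ∃ n, (g − s(g)·1)ⁿ·v = 0}` for a set of elements `G` of a commutative
ℂ-algebra `A` acting by multiplication, with prescribed eigenvalues `s`. -/
def genEigSubmodule {A : Type*} [CommRing A] [Algebra ℂ A]
    (G : Set A) (s : A → ℂ) : Submodule ℂ A where
  carrier := {v | ∀ g ∈ G, ∃ n : ℕ, (g - s g • 1) ^ n * v = 0}
  add_mem' := by
    intro a b ha hb g hg
    obtain ⟨n, hn⟩ := ha g hg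
    obtain ⟨m, hm⟩ := hb g hg
    refine ⟨n + m, ?_⟩
    have h1 : (g - s g • 1) ^ (n + m) * a = (g - s g • 1) ^ m * ((g - s g • 1) ^ n * a) := by
      rw [← mul_assoc, ← pow_add, Nat.add_comm]
    have h2 : (g - s g • 1) ^ (n + m) * b = (g - s g • 1) ^ n * ((g - s g • 1) ^ m * b) := by
      rw [← mul_assoc, ← pow_add]
    rw [mul_add, h1, h2, hn, hm, mul_zero, mul_zero, add_zero]
  zero_mem' := by
    intro g hg
    exact ⟨0, mul_zero _⟩
  smul_mem' := by
    intro c v hv g hg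
    obtain ⟨n, hn⟩ := hv g hg
    exact ⟨n, by rw [mul_smul_comm, hn, smul_zero]⟩

/-- Let `A` be a finite-dimensional commutative unital ℂ-algebra with a
Frobenius pairing, let `G ⊆ A` generate `A` as a unital ℂ-algebra, and let `s : A → ℂ`.
If `α ∈ A` satisfies `g·α = s(g)·α` for all `g ∈ G` and `⟨α, α⟩ ≠ 0`, then the
simultaneous generalized eigenspace
`H = {v : ∀ g ∈ G, ∃ n, (g − s(g)·1)ⁿ·v = 0}` is exactly one-dimensional, spanned by `α`. -/
theorem stmt15 {A : Type*} [CommRing A] [Algebra ℂ A] [FiniteDimensional ℂ A]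
    (Bform : A →ₗ[ℂ] A →ₗ[ℂ] ℂ)
    (hnd : ∀ a : A, (∀ b : A, Bform a b = 0) → a = 0)
    (hfrob : ∀ a b c : A, Bform (a * b) c = Bform a (b * c))
    (G : Set A) (hG : Algebra.adjoin ℂ G = ⊤)
    (s : A → ℂ)
    (α : A) (hα : ∀ g ∈ G, g * α = s g • α) (hαα : Bform α α ≠ 0) :
    genEigSubmodule G s = Submodule.span ℂ {α} ∧
      Module.finrank ℂ ↥(genEigSubmodule G s) = 1 := by

  -- α belongs to the generalized eigenspace
  have hmemα : α ∈ genEigSubmodule G s := by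
    intro g hg
    exact ⟨1, by rw [pow_one, sub_mul, hα g hg, smul_mul_assoc, one_mul, sub_self]⟩
  have hα0 : α ≠ 0 := fun h => hαα (by rw [h]; simp)
  have hchar : ∀ b : A, ∃ μ : ℂ, (∀ x : A, Bform α (b * x) = μ * Bform α x) ∧
      ∀ v : A, (∀ g ∈ G, ∃ n : ℕ, (g - s g • 1) ^ n * v = 0) →
        ∃ n : ℕ, (b - μ • 1) ^ n * v = 0 := by
    intro b
    exact aux_char Bform hfrob G s α hα b (by rw [hG]; trivial)
  have heq : genEigSubmodule G s = Submodule.span ℂ {α} := by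
    apply le_antisymm
    · intro v hv
      set l : ℂ := Bform α v / Bform α α with hl
      set u : A := v - l • α with hu_def
      have hu : u ∈ genEigSubmodule G s :=
        Submodule.sub_mem _ hv (Submodule.smul_mem _ _ hmemα)
      have hBu : Bform α u = 0 := by
        rw [hu_def, map_sub, map_smul, smul_eq_mul, hl, div_mul_cancel₀ _ hαα, sub_self]
      have hαu : α * u = 0 := by
        apply hnd
        intro b
        obtain ⟨μ, hc, _⟩ := hchar b
        rw [hfrob, mul_comm u b, hc, hBu, mul_zero]
      obtain ⟨μ, hc, hnil⟩ := hchar α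
      have hμ : μ ≠ 0 := by
        intro h
        apply hαα
        have h1 := hc 1
        rw [mul_one, h, zero_mul] at h1
        exact h1
      obtain ⟨n, hn⟩ := hnil u hu
      have hk : ∀ k : ℕ, (α - μ • 1) ^ k * u = ((-μ) ^ k) • u := by
        intro k
        induction k with
        | zero => simp
        | succ k ih =>
          calc (α - μ • 1) ^ (k + 1) * u
              = (α - μ • 1) * ((α - μ • 1) ^ k * u) := by rw [← mul_assoc, ← pow_succ']
            _ = (α - μ • 1) * ((-μ) ^ k • u) := by rw [ih]
            _ = (-μ) ^ k • ((α - μ • 1) * u) := (mul_smul_comm _ _ _)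
            _ = (-μ) ^ k • (-(μ • u)) := by
                rw [sub_mul, smul_mul_assoc, one_mul, hαu, zero_sub]
            _ = (-μ) ^ (k + 1) • u := by rw [← neg_smul, smul_smul, ← pow_succ]
      rw [hk n] at hn
      have hu0 : u = 0 :=
        (smul_eq_zero.mp hn).resolve_left (pow_ne_zero n (neg_ne_zero.mpr hμ))
      have : v = l • α := by rwa [hu_def, sub_eq_zero] at hu0
      exact Submodule.mem_span_singleton.mpr ⟨l, this.symm⟩
    · rw [Submodule.span_le, Set.singleton_subset_iff]
      exact hmemα
  refine ⟨heq, ?_⟩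
  rw [heq]
  exact finrank_span_singleton hα0
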